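/- The map T ↦ π_T and the map π ↦ T_π are mutually inverse bijections between binary trees of size n and noncrossing partitions of {1,…,n}. -/
import Mathlib


/-- Planar binary trees. -/
inductive BT : Type
  | leaf : BT
  | node : BT → BT → BT
deriving DecidableEq

namespace BT

/-- Number of internal vertices. -/
def size : BT → ℕ
  | leaf => 0
  | node l r => l.size + r.size + 1

/-- One left rotation somewhere in the tree (covering relation of the Tamari lattice). -/
inductive Rot : BT → BT → Prop
  | root (a b c : BT) : Rot (node (node a b) c) (node a (node b c))
  | left {l l' : BT} (r : BT) : Rot l l' → Rot (node l r) (node l' r)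
  | right (l : BT) {r r' : BT} : Rot r r' → Rot (node l r) (node l r')

/-- The Tamari order: reflexive transitive closure of left rotations. -/
def tamariLE (S T : BT) : Prop := Relation.ReflTransGen Rot S T

/-- The partial order induced by a binary tree on `{1,…,size}` via in-order labelling:
`rel T i j` iff the vertex labelled `i` lies in the subtree rooted at the vertex labelled `j`. -/
def rel : BT → ℕ → ℕ → Prop
  | leaf, _, _ => False
  | node l r, i, j =>
      (j = l.size + 1 ∧ 1 ≤ i ∧ i ≤ l.size + r.size + 1) ∨
      rel l i j ∨
      (∃ i' j', rel r i' j' ∧ i = i' + l.size + 1 ∧ j = j' + l.size + 1)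

/-- Decreasing relations of a tree: pairs `(c, a)` with `a < c` and `c ◁ a`. -/
def Dec (T : BT) : Set (ℕ × ℕ) := {p | p.2 < p.1 ∧ T.rel p.1 p.2}

/-- Increasing relations of a tree: pairs `(a, c)` with `a < c` and `a ◁ c`. -/
def Inc (T : BT) : Set (ℕ × ℕ) := {p | p.1 < p.2 ∧ T.rel p.1 p.2}

/-- Left/right mirror image of a planar binary tree. -/
def mirror : BT → BT
  | leaf => leaf
  | node l r => node r.mirror l.mirror

/-- In-order label of the root (0 for the empty tree). -/
def rootLabel : BT → ℕ
  | leaf => 0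
  | node l _ => l.size + 1

/-- `rcRel T i j` iff, under in-order labelling, the vertex `j` is the right child of vertex `i`. -/
def rcRel : BT → ℕ → ℕ → Prop
  | leaf, _, _ => False
  | node l r, i, j =>
      (i = l.size + 1 ∧ r ≠ leaf ∧ j = l.size + 1 + r.rootLabel) ∨
      rcRel l i j ∨
      (∃ i' j', rcRel r i' j' ∧ i = i' + l.size + 1 ∧ j = j' + l.size + 1)

/-- `graft T i S` grafts the root of `S` on the `i`-th leaf of `T` (leaves numbered 1,…,size+1
from left to right). -/
def graft : BT → ℕ → BT → BT
  | leaf, _, S => S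
  | node l r, i, S =>
      if i ≤ l.size + 1 then node (l.graft i S) r
      else node l (r.graft (i - (l.size + 1)) S)

end BT

/-- An interval-poset of size `n`: a partial order on `{1,…,n}` (encoded as a relation on `ℕ`
supported and reflexive on `{1,…,n}`) satisfying the two interval-poset conditions. -/
def IsIntervalPoset (n : ℕ) (r : ℕ → ℕ → Prop) : Prop :=
  (∀ a b, r a b → 1 ≤ a ∧ a ≤ n ∧ 1 ≤ b ∧ b ≤ n) ∧
  (∀ a, 1 ≤ a → a ≤ n → r a a) ∧
  (∀ a b c, r a b → r b c → r a c) ∧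
  (∀ a b, r a b → r b a → a = b) ∧
  (∀ a b c, a < b → b < c → r a c → r b c) ∧
  (∀ a b c, a < b → b < c → r c a → r c b)

/-- The Châtel–Pons interval-poset of an interval `[S,T]`: reflexivity together with the
decreasing relations of `S` and the increasing relations of `T`. -/
def ipOf (S T : BT) : ℕ → ℕ → Prop := fun a b =>
  (a = b ∧ 1 ≤ a ∧ a ≤ S.size) ∨ (b < a ∧ S.rel a b) ∨ (a < b ∧ T.rel a b)

/-- `HasseCov r a b`: the relation `a ◁ b` is a cover relation (an edge `a → b` of the
Hasse diagram) of the poset `r`. -/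
def HasseCov (r : ℕ → ℕ → Prop) (a b : ℕ) : Prop :=
  r a b ∧ a ≠ b ∧ ∀ c, r a c → r c b → c = a ∨ c = b

/-- An exceptional interval-poset: the Hasse diagram contains no configuration
`y → x`, `y → z` with `x < y < z`. -/
def IsExceptional (n : ℕ) (r : ℕ → ℕ → Prop) : Prop :=
  IsIntervalPoset n r ∧
  ¬∃ x y z, x < y ∧ y < z ∧ HasseCov r y x ∧ HasseCov r y z

/-- A noncrossing tree in the based regular `(n+1)`-gon, with vertices `0,…,n`:
a spanning tree whose edges pairwise do not cross. Boundary edge `i` (for `1 ≤ i ≤ n`)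
joins vertices `i-1` and `i`; the base joins vertices `0` and `n`. -/
def IsNCTree (n : ℕ) (G : SimpleGraph (Fin (n + 1))) : Prop :=
  G.IsTree ∧
  ∀ a b c d : Fin (n + 1), G.Adj a b → G.Adj c d →
    ¬((a : ℕ) < c ∧ (c : ℕ) < b ∧ (b : ℕ) < d)

/-- Adjacency in a graph on `Fin (n+1)`, read on natural numbers. -/
def adjN (n : ℕ) (G : SimpleGraph (Fin (n + 1))) (a b : ℕ) : Prop :=
  ∃ (ha : a < n + 1) (hb : b < n + 1), G.Adj ⟨a, ha⟩ ⟨b, hb⟩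

/-- `EdgeLabel n G a b i`: the edge of the noncrossing tree `G` joining vertices `a < b`
carries the label `i`, i.e. it separates boundary edge `i` from the base and `i` is either
the edge itself (boundary case) or an open boundary edge. -/
def EdgeLabel (n : ℕ) (G : SimpleGraph (Fin (n + 1))) (a b i : ℕ) : Prop :=
  a < b ∧ b ≤ n ∧ adjN n G a b ∧ a < i ∧ i ≤ b ∧ (b = a + 1 ∨ ¬adjN n G (i - 1) i)

/-- The relation `◁_T` induced by a noncrossing tree: `i ◁ j` iff the edge labelled `i`
is separated from the base by the edge labelled `j` (plus reflexivity on `{1,…,n}`). -/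
def ncRel (n : ℕ) (G : SimpleGraph (Fin (n + 1))) : ℕ → ℕ → Prop := fun i j =>
  (i = j ∧ 1 ≤ i ∧ i ≤ n) ∨
  ∃ a b c d, EdgeLabel n G a b i ∧ EdgeLabel n G c d j ∧ c ≤ a ∧ b ≤ d ∧ ¬(a = c ∧ b = d)

/-- The graph `T_P` associated to an interval-poset `P`: for each `v`, an edge from the left
side of `min {x | x ◁ v}` (vertex `min − 1`) to the right side of `max {x | x ◁ v}`. -/
noncomputable def graphOf (n : ℕ) (r : ℕ → ℕ → Prop) : SimpleGraph (Fin (n + 1)) :=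
  SimpleGraph.fromRel (fun a b =>
    ∃ v, 1 ≤ v ∧ v ≤ n ∧ (a : ℕ) + 1 = sInf {x | r x v} ∧ (b : ℕ) = sSup {x | r x v})

/-- The partition `π_T` of a binary tree, as an equivalence-type relation: the finest
partition in which every vertex and its right child lie in the same block. -/
def sameBlock (T : BT) : ℕ → ℕ → Prop :=
  Relation.EqvGen (fun a b => T.rcRel a b ∨ T.rcRel b a)

/-- A relation (thought of as "same block of a partition") is noncrossing. -/
def IsNoncrossingRel (r : ℕ → ℕ → Prop) : Prop :=
  ¬∃ i j k l, i < j ∧ j < k ∧ k < l ∧ r i k ∧ r j l ∧ ¬r i j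

/-- The partition `π_T` of `{1,…,n}` associated to a binary tree, restricted to its support. -/
def partOf (T : BT) : ℕ → ℕ → Prop := fun a b =>
  sameBlock T a b ∧ 1 ≤ a ∧ a ≤ T.size ∧ 1 ≤ b ∧ b ≤ T.size

/-- A noncrossing partition of `{1,…,n}`, encoded as its "same block" equivalence relation. -/
def NCPartition (n : ℕ) (r : ℕ → ℕ → Prop) : Prop :=
  (∀ a b, r a b → 1 ≤ a ∧ a ≤ n ∧ 1 ≤ b ∧ b ≤ n) ∧
  (∀ a, 1 ≤ a → a ≤ n → r a a) ∧
  (∀ a b, r a b → r b a) ∧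
  (∀ a b c, r a b → r b c → r a c) ∧
  IsNoncrossingRel r

/-- `SubtreeAt S i j A`: `A` is a (nonempty) subtree of `S` rooted at an internal vertex,
whose leaves are the leaves `i,…,j` of `S`. -/
def SubtreeAt : BT → ℕ → ℕ → BT → Prop
  | .leaf, _, _, _ => False
  | .node l r, i, j, A =>
      (A = .node l r ∧ i = 1 ∧ j = (BT.node l r).size + 1) ∨
      SubtreeAt l i j A ∨
      (∃ i' j', SubtreeAt r i' j' A ∧ i = i' + l.size + 1 ∧ j = j' + l.size + 1)

/-- A new interval of `Tam n`: an interval that cannot be obtained as the grafting of two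
intervals of smaller sizes. -/
def IsNewInterval (n : ℕ) (S T : BT) : Prop :=
  S.size = n ∧ T.size = n ∧ BT.tamariLE S T ∧
  ¬∃ (S1 T1 S2 T2 : BT) (i : ℕ),
      S1.size = T1.size ∧ S2.size = T2.size ∧ S1.size < n ∧ S2.size < n ∧
      BT.tamariLE S1 T1 ∧ BT.tamariLE S2 T2 ∧ 1 ≤ i ∧ i ≤ S1.size + 1 ∧
      S = S1.graft i S2 ∧ T = T1.graft i T2

/-- The rise of a relation of size `n`: keep the decreasing relations, shift the increasing
relations by `+1`, on the ground set `{1,…,n+1}`. -/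
def riseRel (n : ℕ) (r : ℕ → ℕ → Prop) : ℕ → ℕ → Prop := fun a b =>
  (a = b ∧ 1 ≤ a ∧ a ≤ n + 1) ∨ (b < a ∧ r a b) ∨ (a < b ∧ 2 ≤ a ∧ r (a - 1) (b - 1))

/-- A relation is modern: no configuration `x ◁ y` and `z ◁ y` with `x < y < z`. -/
def ModernRel (r : ℕ → ℕ → Prop) : Prop :=
  ¬∃ x y z, x < y ∧ y < z ∧ r x y ∧ r z y

/-- A new interval-poset of size `m`: no increasing relation starting at `1`, no decreasing
relation starting at `m`, and no pair of relations `i+1 ◁ j+1` and `j ◁ i` with `i < j`. -/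
def NewIP (m : ℕ) (r : ℕ → ℕ → Prop) : Prop :=
  IsIntervalPoset m r ∧
  (¬∃ y, 1 < y ∧ r 1 y) ∧
  (¬∃ x, x < m ∧ r m x) ∧
  ¬∃ i j, i < j ∧ r (i + 1) (j + 1) ∧ r j i

/-- The fall of a relation of size `m`: keep the decreasing relations, shift the increasing
relations by `−1`, on the ground set `{1,…,m−1}`. -/
def fallRel (m : ℕ) (r : ℕ → ℕ → Prop) : ℕ → ℕ → Prop := fun a b =>
  (a = b ∧ 1 ≤ a ∧ a ≤ m - 1) ∨ (b < a ∧ r a b) ∨ (a < b ∧ r (a + 1) (b + 1))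

/-- Iterated rise: `riseIter n r k` is the `k`-th rise of a relation of size `n`. -/
def riseIter (n : ℕ) (r : ℕ → ℕ → Prop) : ℕ → (ℕ → ℕ → Prop)
  | 0 => r
  | k + 1 => riseRel (n + k) (riseIter n r k)

/-- An infinitely modern relation: no configuration `w ◁ x` and `z ◁ y` with `w < x < y < z`. -/
def InfModernRel (r : ℕ → ℕ → Prop) : Prop :=
  ¬∃ w x y z, w < x ∧ x < y ∧ y < z ∧ r w x ∧ r z y

open Classical in
/-- `irStat n r`: the smallest `k` with an increasing relation `k ◁ k+1`, and `n` if none. -/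
noncomputable def irStat (n : ℕ) (r : ℕ → ℕ → Prop) : ℕ :=
  if ∃ k, r k (k + 1) then sInf {k | r k (k + 1)} else n

open Classical in
/-- `drStat n r`: the largest `i` with a decreasing relation `i ◁ i−1`, and `1` if none. -/
noncomputable def drStat (n : ℕ) (r : ℕ → ℕ → Prop) : ℕ :=
  if ∃ i, 2 ≤ i ∧ r i (i - 1) then sSup {i | 2 ≤ i ∧ r i (i - 1)} else 1
section TreeNCPartitionAux

/-- Minimum of the block of `a` in the partition `π_T` (auxiliary). -/
def bmin : BT → ℕ → ℕ
  | .leaf, a => a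
  | .node l r, a =>
      if a ≤ l.size then bmin l a
      else if a = l.size + 1 then a
      else if bmin r (a - (l.size + 1)) = r.rootLabel then l.size + 1
      else bmin r (a - (l.size + 1)) + l.size + 1

lemma size_node (l r : BT) : (BT.node l r).size = l.size + r.size + 1 := rfl

lemma rootLabel_node (l r : BT) : (BT.node l r).rootLabel = l.size + 1 := rfl

lemma size_eq_zero_iff (T : BT) : T.size = 0 ↔ T = .leaf := by
  cases T <;> simp [BT.size]

lemma bmin_node_left (l r : BT) (a : ℕ) (h : a ≤ l.size) :
    bmin (.node l r) a = bmin l a := by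
  simp only [bmin, if_pos h]

lemma bmin_node_root (l r : BT) : bmin (.node l r) (l.size + 1) = l.size + 1 := by
  simp [bmin]

lemma bmin_node_right (l r : BT) (a : ℕ) (h : l.size + 2 ≤ a) :
    bmin (.node l r) a =
      if bmin r (a - (l.size + 1)) = r.rootLabel then l.size + 1
      else bmin r (a - (l.size + 1)) + l.size + 1 := by
  simp only [bmin]
  rw [if_neg (by omega), if_neg (by omega)]

lemma bmin_le (T : BT) : ∀ a, bmin T a ≤ a := by
  induction T with
  | leaf => intro a; exact le_refl a
  | node l r ihl ihr =>
    intro a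
    by_cases h1 : a ≤ l.size
    · rw [bmin_node_left l r a h1]; exact ihl a
    · by_cases h2 : a = l.size + 1
      · subst h2; rw [bmin_node_root]
      · rw [bmin_node_right l r a (by omega)]
        have := ihr (a - (l.size + 1))
        split_ifs <;> omega

lemma bmin_pos (T : BT) : ∀ a, 1 ≤ a → 1 ≤ bmin T a := by
  induction T with
  | leaf => intro a ha; exact ha
  | node l r ihl ihr =>
    intro a ha
    by_cases h1 : a ≤ l.size
    · rw [bmin_node_left l r a h1]; exact ihl a ha
    · by_cases h2 : a = l.size + 1
      · subst h2; rw [bmin_node_root]; omega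
      · rw [bmin_node_right l r a (by omega)]
        split_ifs <;> omega

lemma bmin_right_ge (l r : BT) (a : ℕ) (h : l.size + 1 ≤ a) :
    l.size + 1 ≤ bmin (.node l r) a := by
  by_cases h2 : a = l.size + 1
  · subst h2; rw [bmin_node_root]
  · rw [bmin_node_right l r a (by omega)]
    split_ifs <;> omega

lemma size_pos_of_ne_leaf (T : BT) (h : T ≠ .leaf) : 1 ≤ T.size := by
  cases T with
  | leaf => exact absurd rfl h
  | node l r => rw [size_node]; omega

lemma rootLabel_bounds (T : BT) (h : T ≠ .leaf) :
    1 ≤ T.rootLabel ∧ T.rootLabel ≤ T.size := by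
  cases T with
  | leaf => exact absurd rfl h
  | node l r => rw [rootLabel_node, size_node]; omega

lemma bmin_root (T : BT) (h : T ≠ .leaf) : bmin T T.rootLabel = T.rootLabel := by
  cases T with
  | leaf => exact absurd rfl h
  | node l r => rw [rootLabel_node, bmin_node_root]

lemma bmin_size (T : BT) (h : T ≠ .leaf) : bmin T T.size = T.rootLabel := by
  induction T with
  | leaf => exact absurd rfl h
  | node l r ihl ihr =>
    by_cases hr : r = BT.leaf
    · subst hr
      have : (BT.node l .leaf).size = l.size + 1 := by rw [size_node]; rfl
      rw [this, bmin_node_root, rootLabel_node]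
    · have hq : 1 ≤ r.size := size_pos_of_ne_leaf r hr
      rw [size_node, rootLabel_node, bmin_node_right l r _ (by omega)]
      have h1 : l.size + r.size + 1 - (l.size + 1) = r.size := by omega
      rw [h1, ihr hr, if_pos rfl]

lemma bmin_idem (T : BT) : ∀ a, 1 ≤ a → a ≤ T.size → bmin T (bmin T a) = bmin T a := by
  induction T with
  | leaf => intro a h1 h2; simp [BT.size] at h2; omega
  | node l r ihl ihr =>
    intro a h1 h2
    rw [size_node] at h2
    by_cases hc1 : a ≤ l.size
    · rw [bmin_node_left l r a hc1]
      have hle := bmin_le l a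
      rw [bmin_node_left l r _ (le_trans hle hc1)]
      exact ihl a h1 hc1
    · by_cases hc2 : a = l.size + 1
      · subst hc2; rw [bmin_node_root, bmin_node_root]
      · have ha' : 1 ≤ a - (l.size + 1) ∧ a - (l.size + 1) ≤ r.size := by omega
        rw [bmin_node_right l r a (by omega)]
        by_cases hρ : bmin r (a - (l.size + 1)) = r.rootLabel
        · rw [if_pos hρ, bmin_node_root]
        · rw [if_neg hρ]
          have hpos : 1 ≤ bmin r (a - (l.size + 1)) := bmin_pos r _ ha'.1
          rw [bmin_node_right l r _ (by omega)]
          have h3 : bmin r (a - (l.size + 1)) + l.size + 1 - (l.size + 1)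
              = bmin r (a - (l.size + 1)) := by omega
          rw [h3, ihr _ ha'.1 ha'.2, if_neg hρ]

lemma rcRel_bmin (T : BT) : ∀ i j, T.rcRel i j →
    1 ≤ i ∧ i < j ∧ j ≤ T.size ∧ bmin T i = bmin T j := by
  induction T with
  | leaf => intro i j h; exact absurd h (by simp [BT.rcRel])
  | node l r ihl ihr =>
    intro i j h
    rcases h with ⟨hi, hne, hj⟩ | h | ⟨i', j', h, hi, hj⟩
    · subst hi; subst hj
      have hρ := rootLabel_bounds r hne
      refine ⟨by omega, by omega, by rw [size_node]; omega, ?_⟩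
      rw [bmin_node_root, bmin_node_right l r _ (by omega)]
      have h1 : l.size + 1 + r.rootLabel - (l.size + 1) = r.rootLabel := by omega
      rw [h1, bmin_root r hne, if_pos rfl]
    · obtain ⟨h1, h2, h3, h4⟩ := ihl i j h
      refine ⟨h1, h2, by rw [size_node]; omega, ?_⟩
      rw [bmin_node_left l r i (by omega), bmin_node_left l r j h3, h4]
    · obtain ⟨h1, h2, h3, h4⟩ := ihr i' j' h
      subst hi; subst hj
      refine ⟨by omega, by omega, by rw [size_node]; omega, ?_⟩
      rw [bmin_node_right l r _ (by omega : l.size + 2 ≤ i' + l.size + 1),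
        bmin_node_right l r _ (by omega : l.size + 2 ≤ j' + l.size + 1)]
      have e1 : i' + l.size + 1 - (l.size + 1) = i' := by omega
      have e2 : j' + l.size + 1 - (l.size + 1) = j' := by omega
      rw [e1, e2, h4]

lemma sameBlock_node_left (l r : BT) (a b : ℕ) (h : sameBlock l a b) :
    sameBlock (.node l r) a b := by
  induction h with
  | rel x y hxy =>
    exact Relation.EqvGen.rel x y
      (hxy.imp (fun h => Or.inr (Or.inl h)) (fun h => Or.inr (Or.inl h)))
  | refl x => exact Relation.EqvGen.refl x
  | symm x y _ ih => exact Relation.EqvGen.symm x y ih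
  | trans x y z _ _ ih1 ih2 => exact Relation.EqvGen.trans x y z ih1 ih2

lemma sameBlock_node_right (l r : BT) (a b : ℕ) (h : sameBlock r a b) :
    sameBlock (.node l r) (a + l.size + 1) (b + l.size + 1) := by
  induction h with
  | rel x y hxy =>
    refine Relation.EqvGen.rel _ _ (hxy.imp ?_ ?_) <;>
      exact fun h => Or.inr (Or.inr ⟨_, _, h, rfl, rfl⟩)
  | refl x => exact Relation.EqvGen.refl _
  | symm x y _ ih => exact Relation.EqvGen.symm _ _ ih
  | trans x y z _ _ ih1 ih2 => exact Relation.EqvGen.trans _ _ _ ih1 ih2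

lemma sameBlock_connect (T : BT) : ∀ a, 1 ≤ a → a ≤ T.size → sameBlock T a (bmin T a) := by
  induction T with
  | leaf => intro a h1 h2; simp [BT.size] at h2; omega
  | node l r ihl ihr =>
    intro a h1 h2
    rw [size_node] at h2
    by_cases hc1 : a ≤ l.size
    · rw [bmin_node_left l r a hc1]
      exact sameBlock_node_left l r _ _ (ihl a h1 hc1)
    · by_cases hc2 : a = l.size + 1
      · subst hc2; rw [bmin_node_root]; exact Relation.EqvGen.refl _
      · have ha1 : 1 ≤ a - (l.size + 1) := by omega
        have ha2 : a - (l.size + 1) ≤ r.size := by omega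
        have hrne : r ≠ .leaf := by
          intro h; subst h; simp [BT.size] at ha2; omega
        have hsb : sameBlock (.node l r) a (bmin r (a - (l.size + 1)) + l.size + 1) := by
          have := sameBlock_node_right l r _ _ (ihr _ ha1 ha2)
          have e : a - (l.size + 1) + l.size + 1 = a := by omega
          rwa [e] at this
        rw [bmin_node_right l r a (by omega)]
        by_cases hρ : bmin r (a - (l.size + 1)) = r.rootLabel
        · rw [if_pos hρ]
          have hedge : (BT.node l r).rcRel (l.size + 1) (l.size + 1 + r.rootLabel) :=
            Or.inl ⟨rfl, hrne, rfl⟩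
          have h5 : sameBlock (.node l r) (l.size + 1) (l.size + 1 + r.rootLabel) :=
            Relation.EqvGen.rel _ _ (Or.inl hedge)
          have e2 : bmin r (a - (l.size + 1)) + l.size + 1 = l.size + 1 + r.rootLabel := by
            omega
          rw [e2] at hsb
          exact Relation.EqvGen.trans _ _ _ hsb (Relation.EqvGen.symm _ _ h5)
        · rw [if_neg hρ]; exact hsb

lemma sameBlock_iff (T : BT) (a b : ℕ) :
    sameBlock T a b ↔ a = b ∨
      (1 ≤ a ∧ a ≤ T.size ∧ 1 ≤ b ∧ b ≤ T.size ∧ bmin T a = bmin T b) := by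
  constructor
  · intro h
    induction h with
    | rel x y hxy =>
      rcases hxy with h | h
      · obtain ⟨h1, h2, h3, h4⟩ := rcRel_bmin T x y h
        exact Or.inr ⟨h1, by omega, by omega, h3, h4⟩
      · obtain ⟨h1, h2, h3, h4⟩ := rcRel_bmin T y x h
        exact Or.inr ⟨by omega, h3, h1, by omega, h4.symm⟩
    | refl x => exact Or.inl rfl
    | symm x y _ ih =>
      rcases ih with h | ⟨h1, h2, h3, h4, h5⟩
      · exact Or.inl h.symm
      · exact Or.inr ⟨h3, h4, h1, h2, h5.symm⟩
    | trans x y z _ _ ih1 ih2 =>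
      rcases ih1 with h | ⟨h1, h2, h3, h4, h5⟩
      · rwa [h]
      · rcases ih2 with h' | ⟨h1', h2', h3', h4', h5'⟩
        · rw [← h']; exact Or.inr ⟨h1, h2, h3, h4, h5⟩
        · exact Or.inr ⟨h1, h2, h3', h4', h5.trans h5'⟩
  · rintro (rfl | ⟨h1, h2, h3, h4, h5⟩)
    · exact Relation.EqvGen.refl a
    · have c1 := sameBlock_connect T a h1 h2
      have c2 := sameBlock_connect T b h3 h4
      rw [h5] at c1
      exact Relation.EqvGen.trans _ _ _ c1 (Relation.EqvGen.symm _ _ c2)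

lemma partOf_iff (T : BT) (a b : ℕ) :
    partOf T a b ↔
      1 ≤ a ∧ a ≤ T.size ∧ 1 ≤ b ∧ b ≤ T.size ∧ bmin T a = bmin T b := by
  constructor
  · rintro ⟨hsb, h1, h2, h3, h4⟩
    rcases (sameBlock_iff T a b).mp hsb with rfl | ⟨_, _, _, _, h5⟩
    · exact ⟨h1, h2, h3, h4, rfl⟩
    · exact ⟨h1, h2, h3, h4, h5⟩
  · rintro ⟨h1, h2, h3, h4, h5⟩
    exact ⟨(sameBlock_iff T a b).mpr (Or.inr ⟨h1, h2, h3, h4, h5⟩), h1, h2, h3, h4⟩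

/-- Nesting property: an element squeezed between two block-mates has block-min at least
the common block-min. -/
lemma bmin_between (T : BT) : ∀ a c b, 1 ≤ a → a ≤ c → c ≤ b → b ≤ T.size →
    bmin T a = bmin T b → bmin T a ≤ bmin T c := by
  induction T with
  | leaf => intro a c b h1 h2 h3 h4 _; simp [BT.size] at h4; omega
  | node l r ihl ihr =>
    intro a c b h1 h2 h3 h4 heq
    rw [size_node] at h4
    by_cases hc1 : a ≤ l.size
    · rw [bmin_node_left l r a hc1] at heq ⊢
      have hba : bmin l a ≤ l.size := le_trans (bmin_le l a) hc1
      have hb : b ≤ l.size := by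
        by_contra hb
        have := bmin_right_ge l r b (by omega)
        omega
      rw [bmin_node_left l r b hb] at heq
      rw [bmin_node_left l r c (by omega)]
      exact ihl a c b h1 h2 (by omega) hb heq
    · by_cases hc2 : a = l.size + 1
      · subst hc2
        rw [bmin_node_root]
        exact bmin_right_ge l r c (by omega)
      · have ha2 : l.size + 2 ≤ a := by omega
        obtain ⟨a', rfl⟩ : ∃ x, a = x + (l.size + 1) := ⟨a - (l.size + 1), by omega⟩
        obtain ⟨b', rfl⟩ : ∃ x, b = x + (l.size + 1) := ⟨b - (l.size + 1), by omega⟩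
        obtain ⟨c', rfl⟩ : ∃ x, c = x + (l.size + 1) := ⟨c - (l.size + 1), by omega⟩
        have ha'1 : 1 ≤ a' := by omega
        have hb'2 : b' ≤ r.size := by omega
        have horder : a' ≤ c' ∧ c' ≤ b' := by omega
        rw [bmin_node_right l r _ ha2] at heq ⊢
        rw [bmin_node_right l r _ (by omega : l.size + 2 ≤ b' + (l.size + 1))] at heq
        rw [bmin_node_right l r _ (by omega : l.size + 2 ≤ c' + (l.size + 1))]
        simp only [Nat.add_sub_cancel] at heq ⊢
        by_cases hma : bmin r a' = r.rootLabel
        · rw [if_pos hma]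
          split_ifs with h
          · omega
          · have := bmin_pos r c' (by omega)
            omega
        · rw [if_neg hma] at heq ⊢
          have hmb : ¬ bmin r b' = r.rootLabel := by
            intro h
            rw [if_pos h] at heq
            have := bmin_pos r a' ha'1
            omega
          rw [if_neg hmb] at heq
          have hab : bmin r a' = bmin r b' := by omega
          by_cases hmc : bmin r c' = r.rootLabel
          · exfalso
            have hrne : r ≠ .leaf := by
              intro h; subst h; simp [BT.size] at hb'2; omega
            have hρb : 1 ≤ r.rootLabel ∧ r.rootLabel ≤ r.size := rootLabel_bounds r hrne
            -- ρ ≤ bmin r b'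
            have hρc : r.rootLabel ≤ c' := by
              have := bmin_le r c'; omega
            have step1 : bmin r r.rootLabel ≤ bmin r b' := by
              apply ihr r.rootLabel b' r.size hρb.1 (by omega) hb'2 (le_refl _)
              rw [bmin_root r hrne, bmin_size r hrne]
            rw [bmin_root r hrne] at step1
            -- bmin r a' ≤ ρ
            have hma' : bmin r a' ≤ a' := bmin_le r a'
            have step2 : bmin r (bmin r a') ≤ bmin r c' := by
              apply ihr (bmin r a') c' b' (bmin_pos r a' ha'1) (by omega) horder.2 hb'2
              rw [bmin_idem r a' ha'1 (by omega), hab]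
            rw [bmin_idem r a' ha'1 (by omega), hmc] at step2
            omega
          · rw [if_neg hmc]
            have := ihr a' c' b' ha'1 horder.1 horder.2 hb'2 hab
            omega

lemma noncrossing_partOf (T : BT) : IsNoncrossingRel (partOf T) := by
  rintro ⟨i, j, k, l, hij, hjk, hkl, hik, hjl, hnij⟩
  apply hnij
  rw [partOf_iff] at hik hjl ⊢
  obtain ⟨hi1, hi2, hk1, hk2, hik⟩ := hik
  obtain ⟨hj1, hj2, hl1, hl2, hjl⟩ := hjl
  have h1 : bmin T i ≤ bmin T j := bmin_between T i j k hi1 (by omega) (by omega) hk2 hik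
  have h2 : bmin T j ≤ bmin T k := bmin_between T j k l hj1 (by omega) (by omega) hl2 hjl
  rw [← hik] at h2
  exact ⟨hi1, hi2, hj1, hj2, by omega⟩

lemma ncPartition_partOf (T : BT) : NCPartition T.size (partOf T) := by
  refine ⟨?_, ?_, ?_, ?_, noncrossing_partOf T⟩
  · rintro a b ⟨_, h1, h2, h3, h4⟩; exact ⟨h1, h2, h3, h4⟩
  · intro a h1 h2; exact ⟨Relation.EqvGen.refl a, h1, h2, h1, h2⟩
  · rintro a b ⟨hsb, h1, h2, h3, h4⟩
    exact ⟨Relation.EqvGen.symm _ _ hsb, h3, h4, h1, h2⟩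
  · rintro a b c ⟨hsb, h1, h2, _, _⟩ ⟨hsb', _, _, h3, h4⟩
    exact ⟨Relation.EqvGen.trans _ _ _ hsb hsb', h1, h2, h3, h4⟩

lemma partOf_size_le (T T' : BT) (h : partOf T = partOf T') : T.size ≤ T'.size := by
  by_cases h0 : T.size = 0
  · omega
  · have h1 : partOf T T.size T.size :=
      ⟨Relation.EqvGen.refl _, by omega, le_refl _, by omega, le_refl _⟩
    rw [h] at h1
    exact h1.2.2.2.2

lemma partOf_left_iff (l r : BT) (a b : ℕ) :
    partOf l a b ↔ partOf (.node l r) a b ∧ a ≤ l.size := by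
  rw [partOf_iff, partOf_iff, size_node]
  constructor
  · rintro ⟨h1, h2, h3, h4, h5⟩
    rw [bmin_node_left l r a h2, bmin_node_left l r b h4]
    exact ⟨⟨h1, by omega, h3, by omega, h5⟩, h2⟩
  · rintro ⟨⟨h1, h2, h3, h4, h5⟩, ha⟩
    have hba : bmin (BT.node l r) a ≤ l.size := by
      rw [bmin_node_left l r a ha]; exact le_trans (bmin_le l a) ha
    have hb : b ≤ l.size := by
      by_contra hb
      have := bmin_right_ge l r b (by omega)
      omega
    rw [bmin_node_left l r a ha, bmin_node_left l r b hb] at h5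
    exact ⟨h1, ha, h3, hb, h5⟩

lemma bmin_shift_iff (l r : BT) (a b : ℕ) (ha1 : 1 ≤ a) (ha2 : a ≤ r.size)
    (hb1 : 1 ≤ b) (hb2 : b ≤ r.size) :
    bmin (.node l r) (a + l.size + 1) = bmin (.node l r) (b + l.size + 1) ↔
      bmin r a = bmin r b := by
  have e : ∀ x : ℕ, x + l.size + 1 = x + (l.size + 1) := by omega
  rw [e a, e b, bmin_node_right l r _ (by omega), bmin_node_right l r _ (by omega)]
  simp only [Nat.add_sub_cancel]
  have hpa := bmin_pos r a ha1
  have hpb := bmin_pos r b hb1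
  split_ifs with h1 h2 h2
  · rw [h1, h2]; simp
  · constructor <;> intro h <;> omega
  · constructor <;> intro h <;> omega
  · constructor <;> intro h <;> omega

lemma partOf_right_iff (l r : BT) (a b : ℕ) :
    partOf r a b ↔
      1 ≤ a ∧ 1 ≤ b ∧ partOf (.node l r) (a + l.size + 1) (b + l.size + 1) := by
  rw [partOf_iff, partOf_iff, size_node]
  constructor
  · rintro ⟨h1, h2, h3, h4, h5⟩
    exact ⟨h1, h3, by omega, by omega, by omega, by omega,
      (bmin_shift_iff l r a b h1 h2 h3 h4).mpr h5⟩
  · rintro ⟨h1, h3, _, h2, _, h4, h5⟩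
    exact ⟨h1, by omega, h3, by omega,
      (bmin_shift_iff l r a b h1 (by omega) h3 (by omega)).mp h5⟩

lemma partOf_rootLabel (l r : BT) (T' : BT) (h : partOf (.node l r) = partOf T') :
    ∀ l' r', T' = .node l' r' → l'.size ≤ l.size := by
  rintro l' r' rfl
  have hsz : (BT.node l r).size = (BT.node l' r').size :=
    le_antisymm (partOf_size_le _ _ h) (partOf_size_le _ _ h.symm)
  rw [size_node, size_node] at hsz
  set n := l.size + r.size + 1 with hn
  have hroot : partOf (.node l r) (l.size + 1) n := by
    rw [partOf_iff]
    refine ⟨by omega, by rw [size_node]; omega, by omega, by rw [size_node], ?_⟩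
    rw [bmin_node_root]
    have := bmin_size (.node l r) (by simp)
    rw [size_node] at this
    rw [this, rootLabel_node]
  rw [h] at hroot
  rw [partOf_iff] at hroot
  obtain ⟨_, _, _, _, h5⟩ := hroot
  have h6 : bmin (.node l' r') n = l'.size + 1 := by
    have := bmin_size (.node l' r') (by simp)
    rw [size_node] at this
    rw [show n = l'.size + r'.size + 1 by omega, this, rootLabel_node]
  rw [h6] at h5
  have := bmin_le (.node l' r') (l.size + 1)
  omega

lemma partOf_inj : ∀ T T' : BT, partOf T = partOf T' → T = T' := by
  intro T
  induction T with
  | leaf =>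
    intro T' h
    have h0 : T'.size ≤ BT.leaf.size := partOf_size_le T' .leaf h.symm
    have : T'.size = 0 := by simpa [BT.size] using h0
    exact ((size_eq_zero_iff T').mp this).symm
  | node l r ihl ihr =>
    intro T' h
    cases T' with
    | leaf =>
      have h0 : (BT.node l r).size ≤ BT.leaf.size := partOf_size_le _ _ h
      rw [size_node] at h0
      simp [BT.size] at h0
    | node l' r' =>
      have hp : l.size = l'.size :=
        le_antisymm (partOf_rootLabel l' r' _ h.symm l r rfl)
          (partOf_rootLabel l r _ h l' r' rfl)
      have hl : l = l' := by
        apply ihl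
        funext a b
        apply propext
        rw [partOf_left_iff l r a b, partOf_left_iff l' r' a b, h, hp]
      have hr : r = r' := by
        apply ihr
        funext a b
        apply propext
        rw [partOf_right_iff l r a b, partOf_right_iff l' r' a b, h, hp]
      rw [hl, hr]

lemma exists_tree : ∀ n r, NCPartition n r → ∃ T : BT, T.size = n ∧ partOf T = r := by
  intro n
  induction n using Nat.strong_induction_on with
  | _ n IH =>
  intro r hr
  obtain ⟨hbd, hrefl, hsymm, htrans, hnc⟩ := hr
  by_cases hn0 : n = 0
  · subst hn0
    refine ⟨.leaf, rfl, ?_⟩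
    funext a b; apply propext
    constructor
    · rintro ⟨_, h1, h2, _, _⟩
      exfalso
      simp only [BT.size] at h2
      omega
    · intro h
      exfalso
      have := hbd a b h
      omega
  · have hn1 : 1 ≤ n := by omega
    have hrnn : r n n := hrefl n hn1 (le_refl n)
    set m := sInf {a | r a n} with hm
    have hm_mem : r m n := Nat.sInf_mem (⟨n, hrnn⟩ : Set.Nonempty {a | r a n})
    have hm_min : ∀ a, r a n → m ≤ a := fun a ha => Nat.sInf_le ha
    have hm1 : 1 ≤ m := (hbd m n hm_mem).1
    have hm2 : m ≤ n := hm_min n hrnn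
    have factA : ∀ a b, r a b → a < m → b < m := by
      intro a b hab ha
      by_contra hb
      have hnam : ¬ r a m := by
        intro h
        have := hm_min a (htrans a m n h hm_mem)
        omega
      have hble : b ≤ n := (hbd a b hab).2.2.2
      have hbn : b ≠ n := by
        intro hE
        have := hm_min a (hE ▸ hab)
        omega
      have hbm : b ≠ m := fun hE => hnam (hE ▸ hab)
      exact hnc ⟨a, m, b, n, ha, by omega, by omega, hab, hm_mem, hnam⟩
    have factB : ∀ b, r m b ↔ r b n := by
      intro b
      constructor
      · intro h; exact htrans b m n (hsymm m b h) hm_mem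
      · intro h; exact htrans m n b hm_mem (hsymm b n h)
    have hrl : NCPartition (m - 1) (fun a b => r a b ∧ a < m ∧ b < m) := by
      refine ⟨?_, ?_, ?_, ?_, ?_⟩
      · rintro a b ⟨h, ha, hb⟩
        have := hbd a b h
        exact ⟨this.1, by omega, this.2.2.1, by omega⟩
      · intro a h1 h2
        exact ⟨hrefl a h1 (by omega), by omega, by omega⟩
      · rintro a b ⟨h, ha, hb⟩; exact ⟨hsymm a b h, hb, ha⟩
      · rintro a b c ⟨h1, ha, hb⟩ ⟨h2, _, hc⟩; exact ⟨htrans a b c h1 h2, ha, hc⟩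
      · rintro ⟨i, j, k, l, hij, hjk, hkl, ⟨hik, hi, hk⟩, ⟨hjl, hj, hl⟩, hnij⟩
        exact hnc ⟨i, j, k, l, hij, hjk, hkl, hik, hjl, fun h => hnij ⟨h, hi, by omega⟩⟩
    have hrr : NCPartition (n - m)
        (fun a b => r (a + m) (b + m) ∧ 1 ≤ a ∧ a ≤ n - m ∧ 1 ≤ b ∧ b ≤ n - m) := by
      refine ⟨?_, ?_, ?_, ?_, ?_⟩
      · rintro a b ⟨_, h1, h2, h3, h4⟩; exact ⟨h1, h2, h3, h4⟩
      · intro a h1 h2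
        exact ⟨hrefl (a + m) (by omega) (by omega), h1, h2, h1, h2⟩
      · rintro a b ⟨h, h1, h2, h3, h4⟩; exact ⟨hsymm _ _ h, h3, h4, h1, h2⟩
      · rintro a b c ⟨h, h1, h2, _, _⟩ ⟨h', _, _, h3, h4⟩
        exact ⟨htrans _ _ _ h h', h1, h2, h3, h4⟩
      · rintro ⟨i, j, k, l, hij, hjk, hkl, ⟨hik, hi1, hi2, hk1, hk2⟩,
          ⟨hjl, hj1, hj2, hl1, hl2⟩, hnij⟩
        exact hnc ⟨i + m, j + m, k + m, l + m, by omega, by omega, by omega, hik, hjl,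
          fun h => hnij ⟨h, hi1, hi2, hj1, hj2⟩⟩
    obtain ⟨l, hls, hpl⟩ := IH (m - 1) (by omega) _ hrl
    obtain ⟨rt, hrs, hpr⟩ := IH (n - m) (by omega) _ hrr
    refine ⟨.node l rt, by rw [size_node]; omega, ?_⟩
    have hsize : (BT.node l rt).size = n := by rw [size_node]; omega
    have bl : ∀ x y, 1 ≤ x → x ≤ m - 1 → 1 ≤ y → y ≤ m - 1 →
        (bmin l x = bmin l y ↔ r x y) := by
      intro x y h1 h2 h3 h4
      constructor
      · intro h
        have hpo : partOf l x y :=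
          (partOf_iff l x y).mpr ⟨h1, by omega, h3, by omega, h⟩
        rw [hpl] at hpo
        exact hpo.1
      · intro h
        have hpo : partOf l x y := by
          rw [hpl]; exact ⟨h, by omega, by omega⟩
        exact ((partOf_iff l x y).mp hpo).2.2.2.2
    have br : ∀ x y, 1 ≤ x → x ≤ n - m → 1 ≤ y → y ≤ n - m →
        (bmin rt x = bmin rt y ↔ r (x + m) (y + m)) := by
      intro x y h1 h2 h3 h4
      constructor
      · intro h
        have hpo : partOf rt x y :=
          (partOf_iff rt x y).mpr ⟨h1, by omega, h3, by omega, h⟩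
        rw [hpr] at hpo
        exact hpo.1
      · intro h
        have hpo : partOf rt x y := by
          rw [hpr]; exact ⟨h, h1, h2, h3, h4⟩
        exact ((partOf_iff rt x y).mp hpo).2.2.2.2
    have key : ∀ a b, a ≤ b → 1 ≤ a → b ≤ n →
        (bmin (BT.node l rt) a = bmin (BT.node l rt) b ↔ r a b) := by
      intro a b hab h1 hb
      rcases Nat.lt_or_ge b m with hbm | hbm
      · rw [bmin_node_left l rt a (by omega), bmin_node_left l rt b (by omega)]
        exact bl a b h1 (by omega) (by omega) (by omega)
      · rcases Nat.lt_or_ge a m with ham | ham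
        · have hL : bmin (BT.node l rt) a < m := by
            rw [bmin_node_left l rt a (by omega)]
            have := bmin_le l a; omega
          have hR : m ≤ bmin (BT.node l rt) b := by
            have := bmin_right_ge l rt b (by omega)
            omega
          constructor
          · intro h; omega
          · intro h
            exact absurd (factA a b h ham) (by omega)
        · rcases Nat.lt_or_ge m a with ham' | ham'
          · have hs := bmin_shift_iff l rt (a - m) (b - m) (by omega) (by omega)
              (by omega) (by omega)
            rw [show a - m + l.size + 1 = a by omega,
              show b - m + l.size + 1 = b by omega] at hs
            have hbr := br (a - m) (b - m) (by omega) (by omega) (by omega) (by omega)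
            rw [show a - m + m = a by omega, show b - m + m = b by omega] at hbr
            exact hs.trans hbr
          · have ham2 : a = m := by omega
            subst ham2
            rcases Nat.eq_or_lt_of_le hab with rfl | hmb
            · exact ⟨fun _ => hrefl m (by omega) (by omega), fun _ => rfl⟩
            · have hq : 1 ≤ n - m := by omega
              have hrtne : rt ≠ .leaf := by
                intro hE
                rw [hE] at hrs
                simp only [BT.size] at hrs
                omega
              have hLm : bmin (BT.node l rt) m = m := by
                have h0 := bmin_node_root l rt
                rwa [show l.size + 1 = m by omega] at h0
              rw [hLm, bmin_node_right l rt b (by omega),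
                show b - (l.size + 1) = b - m by omega]
              have h0 : bmin rt (n - m) = rt.rootLabel := by
                rw [← hrs]; exact bmin_size rt hrtne
              have hch : bmin rt (b - m) = rt.rootLabel ↔ r b n := by
                constructor
                · intro h
                  have he : bmin rt (b - m) = bmin rt (n - m) := by rw [h, h0]
                  have := (br (b - m) (n - m) (by omega) (by omega) hq (le_refl _)).mp he
                  rwa [show b - m + m = b by omega, show n - m + m = n by omega] at this
                · intro h
                  have h2 : r (b - m + m) (n - m + m) := by
                    rwa [show b - m + m = b by omega, show n - m + m = n by omega]
                  have := (br (b - m) (n - m) (by omega) (by omega) hq (le_refl _)).mpr h2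
                  rw [this, h0]
              split_ifs with hif
              · constructor
                · intro _; exact (factB b).mpr (hch.mp hif)
                · intro _; omega
              · constructor
                · intro hEq
                  exfalso
                  have := bmin_pos rt (b - m) (by omega)
                  omega
                · intro hrb
                  exact absurd (hch.mpr ((factB b).mp hrb)) hif
    funext a b
    apply propext
    constructor
    · intro hp
      have hi := (partOf_iff _ a b).mp hp
      rw [hsize] at hi
      obtain ⟨h1, h2, h3, h4, h5⟩ := hi
      rcases Nat.le_total a b with h | h
      · exact (key a b h h1 h4).mp h5
      · exact hsymm b a ((key b a h h3 h2).mp h5.symm)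
    · intro hrab
      have hbo := hbd a b hrab
      apply (partOf_iff _ a b).mpr
      rw [hsize]
      rcases Nat.le_total a b with h | h
      · exact ⟨hbo.1, hbo.2.1, hbo.2.2.1, hbo.2.2.2, (key a b h hbo.1 hbo.2.2.2).mpr hrab⟩
      · exact ⟨hbo.1, hbo.2.1, hbo.2.2.1, hbo.2.2.2,
          ((key b a h hbo.2.2.1 hbo.2.1).mpr (hsymm a b hrab)).symm⟩

end TreeNCPartitionAux

/-- `T ↦ π_T` is a bijection between binary trees of size `n` and noncrossing
partitions of `{1,…,n}` (its inverse being `π ↦ T_π`). -/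
theorem tree_ncPartition_bijection (n : ℕ) :
    (∀ T : BT, T.size = n → NCPartition n (partOf T)) ∧
    (∀ r : ℕ → ℕ → Prop, NCPartition n r → ∃! T : BT, T.size = n ∧ partOf T = r) := by
  constructor
  · intro T hT
    exact hT ▸ ncPartition_partOf T
  · intro r hr
    obtain ⟨T, h1, h2⟩ := exists_tree n r hr
    exact ⟨T, ⟨h1, h2⟩, fun T' ⟨h1', h2'⟩ => partOf_inj T' T (h2'.trans h2.symm)⟩
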